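/- arXiv:2107.02144 — 7 statements merged into one kernel-verified Lean document; each statement's English description precedes it below -/
import Mathlib

section
/- Let A be a finite alphabet with |A| ≥ 2. Any code C ⊆ A³ that is unambiguous for the Diamond Network (i.e., for some functions f₁ : A → A and f₂ : A × A → A, the output sets Ω(x) = {(f₁(x₁'), f₂(x₂', x₃')) : (x₁',x₂',x₃') ∈ A³ differs from x in at most one coordinate} are pairwise disjoint for distinct codewords) must have minimum Hamming distance at least 3. -/
open Finset

/-- Hamming distance on triples. -/
def dH3 {A : Type*} [DecidableEq A] (x y : A × A × A) : ℕ :=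
  (if x.1 = y.1 then 0 else 1) + (if x.2.1 = y.2.1 then 0 else 1) +
    (if x.2.2 = y.2.2 then 0 else 1)

/-- The set of possible outputs at the terminal of the Diamond Network. -/
def Omega {A : Type*} [Fintype A] [DecidableEq A] (f₁ : A → A) (f₂ : A → A → A)
    (x : A × A × A) : Finset (A × A) :=
  (Finset.univ.filter fun x' : A × A × A => dH3 x' x ≤ 1).image
    fun x' => (f₁ x'.1, f₂ x'.2.1 x'.2.2)

/-- An outer code is unambiguous if output sets of distinct codewords are disjoint. -/
def Unambiguous {A : Type*} [Fintype A] [DecidableEq A] (f₁ : A → A) (f₂ : A → A → A)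
    (C : Finset (A × A × A)) : Prop :=
  ∀ x ∈ C, ∀ y ∈ C, x ≠ y → Disjoint (Omega f₁ f₂ x) (Omega f₁ f₂ y)

section

variable {A : Type*} [DecidableEq A]

lemma exists_dH3_le_one_of_dH3_le_two {x y : A × A × A} (h : dH3 x y ≤ 2) :
    ∃ z, dH3 z x ≤ 1 ∧ dH3 z y ≤ 1 := by
  obtain ⟨x₁, x₂, x₃⟩ := x
  obtain ⟨y₁, y₂, y₃⟩ := y
  by_cases h₁ : x₁ = y₁
  · refine ⟨(x₁, y₂, x₃), ?_⟩
    simp only [dH3]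
    split_ifs <;> simp_all
  · refine ⟨(y₁, x₂, x₃), ?_⟩
    simp only [dH3] at h ⊢
    split_ifs at h ⊢ <;> simp_all

variable [Fintype A] (f₁ : A → A) (f₂ : A → A → A)

lemma mem_Omega_of_dH3_le_one {x z : A × A × A} (h : dH3 z x ≤ 1) :
    (f₁ z.1, f₂ z.2.1 z.2.2) ∈ Omega f₁ f₂ x :=
  mem_image.mpr ⟨z, mem_filter.mpr ⟨mem_univ z, h⟩, rfl⟩

lemma not_disjoint_Omega_of_dH3_le_two {x y : A × A × A} (h : dH3 x y ≤ 2) :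
    ¬Disjoint (Omega f₁ f₂ x) (Omega f₁ f₂ y) := by
  obtain ⟨z, hzx, hzy⟩ := exists_dH3_le_one_of_dH3_le_two h
  exact not_disjoint_iff.mpr
    ⟨_, mem_Omega_of_dH3_le_one f₁ f₂ hzx, mem_Omega_of_dH3_le_one f₁ f₂ hzy⟩

end

theorem stmt0_general {A : Type*} [Fintype A] [DecidableEq A]
    (f₁ : A → A) (f₂ : A → A → A) (C : Finset (A × A × A))
    (hC : Unambiguous f₁ f₂ C) :
    ∀ x ∈ C, ∀ y ∈ C, x ≠ y → 3 ≤ dH3 x y := by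
  intro x hx y hy hxy
  by_contra! h
  exact not_disjoint_Omega_of_dH3_le_two f₁ f₂ (Nat.le_of_lt_succ h) (hC x hx y hy hxy)

theorem stmt0 {A : Type*} [Fintype A] [DecidableEq A] (hA : 2 ≤ Fintype.card A)
    (f₁ : A → A) (f₂ : A → A → A) (C : Finset (A × A × A))
    (hC : Unambiguous f₁ f₂ C) :
    ∀ x ∈ C, ∀ y ∈ C, x ≠ y → 3 ≤ dH3 x y :=
  stmt0_general f₁ f₂ C hC
end

section
/- Let A be a finite alphabet, f₁ : A → A, f₂ : A × A → A, and let C ⊆ A³ be unambiguous for the Diamond Network with these functions. Then the projection π : A³ → A onto the first coordinate is injective on C. -/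
open Finset

/-! Two codewords with the same first coordinate share the output of the word that copies their
common first two symbols from `x` and its third symbol from `y`: it is one error away from each. -/

theorem dH3_le_one_of_fst_eq_of_snd_eq {A : Type*} [DecidableEq A] {x y : A × A × A}
    (h₁ : x.1 = y.1) (h₂ : x.2.1 = y.2.1) : dH3 x y ≤ 1 := by
  unfold dH3
  split_ifs <;> simp_all

theorem dH3_le_one_of_fst_eq_of_thd_eq {A : Type*} [DecidableEq A] {x y : A × A × A}
    (h₁ : x.1 = y.1) (h₃ : x.2.2 = y.2.2) : dH3 x y ≤ 1 := by
  unfold dH3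
  split_ifs <;> simp_all

theorem mem_Omega_of_dH3_le_one_s1 {A : Type*} [Fintype A] [DecidableEq A] (f₁ : A → A)
    (f₂ : A → A → A) {x x' : A × A × A} (h : dH3 x' x ≤ 1) :
    (f₁ x'.1, f₂ x'.2.1 x'.2.2) ∈ Omega f₁ f₂ x :=
  mem_image_of_mem _ (mem_filter.mpr ⟨mem_univ x', h⟩)

theorem Unambiguous.eq_of_mem_Omega {A : Type*} [Fintype A] [DecidableEq A] {f₁ : A → A}
    {f₂ : A → A → A} {C : Finset (A × A × A)} (hC : Unambiguous f₁ f₂ C)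
    {x y : A × A × A} (hx : x ∈ C) (hy : y ∈ C) {p : A × A}
    (hpx : p ∈ Omega f₁ f₂ x) (hpy : p ∈ Omega f₁ f₂ y) : x = y := by
  by_contra hne
  exact disjoint_left.mp (hC x hx y hy hne) hpx hpy

theorem stmt1 {A : Type*} [Fintype A] [DecidableEq A]
    (f₁ : A → A) (f₂ : A → A → A) (C : Finset (A × A × A))
    (hC : Unambiguous f₁ f₂ C) :
    ∀ x ∈ C, ∀ y ∈ C, x.1 = y.1 → x = y := by
  intro x hx y hy h₁
  set z : A × A × A := (x.1, x.2.1, y.2.2)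
  have hzx : dH3 z x ≤ 1 := dH3_le_one_of_fst_eq_of_snd_eq rfl rfl
  have hzy : dH3 z y ≤ 1 := dH3_le_one_of_fst_eq_of_thd_eq h₁ rfl
  exact hC.eq_of_mem_Omega hx hy (mem_Omega_of_dH3_le_one_s1 f₁ f₂ hzx)
    (mem_Omega_of_dH3_le_one_s1 f₁ f₂ hzy)
end

section
/- Let A be a finite alphabet with |A| ≥ 2, f₁ : A → A, f₂ : A × A → A, and let C ⊆ A³ be unambiguous for the Diamond Network with these functions. Then |C|² + |C| − 1 ≤ |A|². -/
open Finset

/-!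
Every output set `Ω(x)` contains the "row" `f₁(A) × {f₂(x₂, x₃)}` obtained by corrupting `x₁`,
and it contains a further point unless `f₂` is constant on the row and the column through
`(x₂, x₃)`. Unambiguity makes `x ↦ f₁ x₁` injective on `C` (so `|C| ≤ |f₁(A)|`) and allows at
most one codeword with this degenerate behaviour of `f₂`. Since the output sets are disjoint
subsets of `A²`, summing gives `|C|·|C| + (|C| - 1) ≤ |A|²`.
-/

def IsCrossConstant {A : Type*} (g : A → A → A) (p : A × A) : Prop :=
  ∀ a, g a p.2 = g p.1 p.2 ∧ g p.1 a = g p.1 p.2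

namespace Omega

variable {A : Type*} [Fintype A] [DecidableEq A] {f₁ : A → A} {f₂ : A → A → A}

lemma mem_of_dH3_le_one {x x' : A × A × A} (h : dH3 x' x ≤ 1) :
    (f₁ x'.1, f₂ x'.2.1 x'.2.2) ∈ Omega f₁ f₂ x :=
  mem_image.mpr ⟨x', mem_filter.mpr ⟨mem_univ _, h⟩, rfl⟩

lemma mk_fst_mem (x : A × A × A) (a : A) : (f₁ a, f₂ x.2.1 x.2.2) ∈ Omega f₁ f₂ x :=
  mem_of_dH3_le_one (x' := (a, x.2.1, x.2.2)) (by simp only [dH3]; split_ifs <;> simp)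

lemma mk_snd_mem (x : A × A × A) (a : A) : (f₁ x.1, f₂ a x.2.2) ∈ Omega f₁ f₂ x :=
  mem_of_dH3_le_one (x' := (x.1, a, x.2.2)) (by simp only [dH3]; split_ifs <;> simp)

lemma mk_thd_mem (x : A × A × A) (a : A) : (f₁ x.1, f₂ x.2.1 a) ∈ Omega f₁ f₂ x :=
  mem_of_dH3_le_one (x' := (x.1, x.2.1, a)) (by simp only [dH3]; split_ifs <;> simp)

lemma image_prod_singleton_subset (x : A × A × A) :
    univ.image f₁ ×ˢ {f₂ x.2.1 x.2.2} ⊆ Omega f₁ f₂ x := by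
  rintro ⟨b, c⟩ hp
  obtain ⟨⟨a, rfl⟩, rfl⟩ : (∃ a, f₁ a = b) ∧ f₂ x.2.1 x.2.2 = c := by simpa using hp
  exact mk_fst_mem x a

lemma card_image_le_card (x : A × A × A) : (univ.image f₁).card ≤ (Omega f₁ f₂ x).card := by
  simpa using card_le_card (image_prod_singleton_subset (f₂ := f₂) x)

lemma card_image_lt_card {x : A × A × A} (hx : ¬ IsCrossConstant f₂ x.2) :
    (univ.image f₁).card < (Omega f₁ f₂ x).card := by
  obtain ⟨a, ha⟩ := not_forall.mp hx
  obtain ⟨e, he, hne⟩ : ∃ e ∈ Omega f₁ f₂ x, e.2 ≠ f₂ x.2.1 x.2.2 := by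
    rcases not_and_or.mp ha with h | h
    · exact ⟨_, mk_snd_mem x a, h⟩
    · exact ⟨_, mk_thd_mem x a, h⟩
  have he_notMem : e ∉ univ.image f₁ ×ˢ {f₂ x.2.1 x.2.2} := fun h =>
    hne (mem_singleton.mp (mem_product.mp h).2)
  calc (univ.image f₁).card
      < (insert e (univ.image f₁ ×ˢ {f₂ x.2.1 x.2.2})).card := by
        rw [card_insert_of_notMem he_notMem, card_product, card_singleton, mul_one]
        exact Nat.lt_succ_self _
    _ ≤ (Omega f₁ f₂ x).card := card_le_card (insert_subset he (image_prod_singleton_subset x))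

end Omega

namespace Unambiguous

variable {A : Type*} [Fintype A] [DecidableEq A] {f₁ : A → A} {f₂ : A → A → A}
  {C : Finset (A × A × A)}

lemma eq_of_common_output (hC : Unambiguous f₁ f₂ C) {x y : A × A × A} (hx : x ∈ C) (hy : y ∈ C)
    {e : A × A} (hex : e ∈ Omega f₁ f₂ x) (hey : e ∈ Omega f₁ f₂ y) : x = y := by
  by_contra hne
  exact disjoint_left.mp (hC x hx y hy hne) hex hey

lemma injOn_fst (hC : Unambiguous f₁ f₂ C) : Set.InjOn (fun x : A × A × A => f₁ x.1) C := by
  intro x hx y hy h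
  refine hC.eq_of_common_output hx hy (Omega.mk_thd_mem x y.2.2) ?_
  rw [show f₁ x.1 = f₁ y.1 from h]
  exact Omega.mk_snd_mem y x.2.1

lemma card_le_card_image (hC : Unambiguous f₁ f₂ C) : C.card ≤ (univ.image f₁).card := by
  rw [← card_image_of_injOn hC.injOn_fst]
  exact card_le_card fun _ h => by
    obtain ⟨x, -, rfl⟩ := mem_image.mp h
    exact mem_image_of_mem f₁ (mem_univ x.1)

lemma eq_of_isCrossConstant (hC : Unambiguous f₁ f₂ C) {x y : A × A × A} (hx : x ∈ C)
    (hy : y ∈ C) (hx' : IsCrossConstant f₂ x.2) (hy' : IsCrossConstant f₂ y.2) : x = y := by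
  have hval : f₂ x.2.1 x.2.2 = f₂ y.2.1 y.2.2 := by
    rw [← (hx' y.2.2).2, (hy' x.2.1).1]
  refine hC.eq_of_common_output hx hy (Omega.mk_fst_mem x x.1) ?_
  rw [hval]
  exact Omega.mk_fst_mem y x.1

lemma sum_card_omega_le (hC : Unambiguous f₁ f₂ C) :
    ∑ x ∈ C, (Omega f₁ f₂ x).card ≤ Fintype.card A ^ 2 := by
  rw [← card_biUnion hC, sq, ← Fintype.card_prod]
  exact card_le_univ _

end Unambiguous

theorem stmt6_general {A : Type*} [Fintype A] [DecidableEq A]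
    (f₁ : A → A) (f₂ : A → A → A) (C : Finset (A × A × A))
    (hC : Unambiguous f₁ f₂ C) :
    C.card ^ 2 + C.card - 1 ≤ Fintype.card A ^ 2 := by
  classical
  set D := C.filter fun x => IsCrossConstant f₂ x.2
  set N := C.filter fun x => ¬ IsCrossConstant f₂ x.2
  have hD : D.card ≤ 1 := card_le_one.mpr fun x hx y hy =>
    hC.eq_of_isCrossConstant (mem_filter.mp hx).1 (mem_filter.mp hy).1
      (mem_filter.mp hx).2 (mem_filter.mp hy).2
  have hDN : D.card + N.card = C.card := card_filter_add_card_filter_not _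
  have hlow : D.card * C.card + N.card * (C.card + 1) ≤ ∑ x ∈ C, (Omega f₁ f₂ x).card := by
    rw [← sum_filter_add_sum_filter_not C fun x => IsCrossConstant f₂ x.2]
    gcongr
    · exact card_nsmul_le_sum _ _ _ fun x _ =>
        hC.card_le_card_image.trans (Omega.card_image_le_card x)
    · exact card_nsmul_le_sum _ _ _ fun x hx =>
        Nat.succ_le_of_lt <|
          hC.card_le_card_image.trans_lt (Omega.card_image_lt_card (mem_filter.mp hx).2)
  have hexpand : D.card * C.card + N.card * (C.card + 1) = C.card ^ 2 + N.card := by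
    rw [← hDN]; ring
  have hupper := hC.sum_card_omega_le
  omega

theorem stmt6 {A : Type*} [Fintype A] [DecidableEq A] (hA : 2 ≤ Fintype.card A)
    (f₁ : A → A) (f₂ : A → A → A) (C : Finset (A × A × A))
    (hC : Unambiguous f₁ f₂ C) :
    C.card ^ 2 + C.card - 1 ≤ Fintype.card A ^ 2 :=
  stmt6_general f₁ f₂ C hC
end

section
/- Let A be a finite alphabet with |A| ≥ 2 and fix a symbol * ∈ A. Define f₁ : A → A as the identity, and f₂ : A × A → A by f₂(a,b) = a if a = b and a ≠ *, and f₂(a,b) = * otherwise. Let C = {(a,a,a) : a ∈ A, a ≠ *}. Then C is unambiguous for the Diamond Network with functions f₁, f₂; in particular there exists an unambiguous code of size |A| − 1. -/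
open Finset

lemma dH3_le_one_diag {A : Type*} [DecidableEq A] {x : A × A × A} {a : A}
    (h : dH3 x (a, a, a) ≤ 1) :
    (x.1 = a ∨ x.2.1 = a ∧ x.2.2 = a) ∧ (x.2.1 = a ∨ x.2.2 = a) := by
  obtain ⟨x₁, x₂, x₃⟩ := x
  simp only [dH3] at h
  split_ifs at h <;> simp_all

/-- The lower stream can show `star` only if the single corruption hit it, so the upper stream
still shows `a`. -/
lemma mem_omega_diag {A : Type*} [Fintype A] [DecidableEq A] {star a : A} (ha : a ≠ star)
    {z : A × A}
    (hz : z ∈ Omega (fun a => a) (fun a b => if a = b ∧ a ≠ star then a else star) (a, a, a)) :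
    z.2 = a ∨ z.1 = a ∧ z.2 = star := by
  simp only [Omega, mem_image, mem_filter, mem_univ, true_and] at hz
  obtain ⟨x, hd, rfl⟩ := hz
  obtain ⟨hupper | ⟨h₂, h₃⟩, hlower⟩ := dH3_le_one_diag hd
  · dsimp only
    split_ifs with hagree
    · rw [hagree.1] at hlower ⊢
      exact Or.inl (hlower.elim id id)
    · exact Or.inr ⟨hupper, rfl⟩
  · simp [h₂, h₃, ha]

lemma disjoint_omega_diag {A : Type*} [Fintype A] [DecidableEq A] {star a b : A}
    (ha : a ≠ star) (hb : b ≠ star) (hab : a ≠ b) :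
    Disjoint
      (Omega (fun a => a) (fun a b => if a = b ∧ a ≠ star then a else star) (a, a, a))
      (Omega (fun a => a) (fun a b => if a = b ∧ a ≠ star then a else star) (b, b, b)) := by
  rw [Finset.disjoint_left]
  intro z hza hzb
  rcases mem_omega_diag ha hza with hz | ⟨hz₁, hz₂⟩ <;>
    rcases mem_omega_diag hb hzb with hz' | ⟨hz₁', hz₂'⟩
  · exact hab (hz.symm.trans hz')
  · exact ha (hz.symm.trans hz₂')
  · exact hb (hz'.symm.trans hz₂)
  · exact hab (hz₁.symm.trans hz₁')

theorem stmt9_general {A : Type*} [Fintype A] [DecidableEq A]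
    (star : A) :
    Unambiguous (fun a => a) (fun a b => if a = b ∧ a ≠ star then a else star)
        ((Finset.univ.erase star).image fun a => (a, a, a)) ∧
    ((Finset.univ.erase star).image fun a : A => (a, a, a)).card = Fintype.card A - 1 := by
  have hdiag_inj : Function.Injective fun a : A => (a, a, a) := fun a b h => congrArg Prod.fst h
  refine ⟨?_, ?_⟩
  · simp only [Unambiguous, mem_image, mem_erase, mem_univ, and_true]
    rintro _ ⟨a, ha, rfl⟩ _ ⟨b, hb, rfl⟩ hab
    exact disjoint_omega_diag ha hb (fun h => hab (h ▸ rfl))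
  · rw [card_image_of_injective _ hdiag_inj, card_erase_of_mem (mem_univ _), card_univ]

theorem stmt9 {A : Type*} [Fintype A] [DecidableEq A] (hA : 2 ≤ Fintype.card A)
    (star : A) :
    Unambiguous (fun a => a) (fun a b => if a = b ∧ a ≠ star then a else star)
        ((Finset.univ.erase star).image fun a => (a, a, a)) ∧
    ((Finset.univ.erase star).image fun a : A => (a, a, a)).card = Fintype.card A - 1 :=
  stmt9_general star
end

section
/- Let A be a finite alphabet with |A| ≥ 2, f₁ : A → A, f₂ : A × A → A. The maximum cardinality of a code C ⊆ A³ unambiguous for the Diamond Network, over all choices of f₁, f₂ and C, is exactly |A| − 1. -/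
/-!
Every codeword `x` of an unambiguous code is recovered from `f₂ (x₂, x₃)`: changing the first
coordinate of the received word only moves the first output, so two codewords with the same
value of `f₂` share an output. Hence `f₂` is injective on the code, and a code with `|A|`
words makes it a bijection onto `A`. But then for two codewords `x ≠ y` the value
`f₂ (x₂, y₃)` is reached both from `x` (one error in the third coordinate) and from `y` (one error
in the second), so the codeword `z` with `f₂ (z₂, z₃) = f₂ (x₂, y₃)` would equal both.

Conversely, with `f₁ = id` and `f₂ u v = u` if `u = v` and `s` otherwise, the repetition words
`(a, a, a)`, `a ≠ s`, have the output sets `{(u, a)} ∪ {(a, s)}`, which are pairwise disjoint.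
-/

open Finset

section

variable {A : Type*} [DecidableEq A]

lemma dH3_mk_fst_le_one (a : A) (x : A × A × A) : dH3 (a, x.2) x ≤ 1 := by
  simp only [dH3]
  split_ifs <;> omega

lemma dH3_mk_snd_le_one (a : A) (x : A × A × A) : dH3 (x.1, a, x.2.2) x ≤ 1 := by
  simp only [dH3]
  split_ifs <;> omega

lemma dH3_mk_thd_le_one (a : A) (x : A × A × A) : dH3 (x.1, x.2.1, a) x ≤ 1 := by
  simp only [dH3]
  split_ifs <;> omega

def agreeOr (s u v : A) : A := if u = v then u else s

end

section

variable {A : Type*} [Fintype A] [DecidableEq A]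

lemma mem_Omega {f₁ : A → A} {f₂ : A → A → A} {x : A × A × A} {p : A × A} :
    p ∈ Omega f₁ f₂ x ↔ ∃ x', dH3 x' x ≤ 1 ∧ (f₁ x'.1, f₂ x'.2.1 x'.2.2) = p := by
  simp [Omega]

lemma mem_Omega_of_dH3_le (f₁ : A → A) (f₂ : A → A → A) {x x' : A × A × A}
    (h : dH3 x' x ≤ 1) : (f₁ x'.1, f₂ x'.2.1 x'.2.2) ∈ Omega f₁ f₂ x :=
  mem_Omega.2 ⟨x', h, rfl⟩

namespace Unambiguous

variable {f₁ : A → A} {f₂ : A → A → A} {C : Finset (A × A × A)}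

lemma eq_of_f₂_eq (hU : Unambiguous f₁ f₂ C) {x y x' : A × A × A} (hx : x ∈ C) (hy : y ∈ C)
    (hx' : dH3 x' x ≤ 1) (h : f₂ x'.2.1 x'.2.2 = f₂ y.2.1 y.2.2) : x = y := by
  by_contra hxy
  refine disjoint_left.1 (hU x hx y hy hxy) (mem_Omega_of_dH3_le f₁ f₂ hx') ?_
  rw [h]
  exact mem_Omega_of_dH3_le f₁ f₂ (dH3_mk_fst_le_one x'.1 y)

lemma injOn_f₂ (hU : Unambiguous f₁ f₂ C) : Set.InjOn (fun x : A × A × A => f₂ x.2.1 x.2.2) C :=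
  fun _ hx _ hy h => hU.eq_of_f₂_eq hx hy (dH3_mk_fst_le_one _ _) h

lemma card_lt (hU : Unambiguous f₁ f₂ C) (hC : 1 < #C) : #C < Fintype.card A := by
  by_contra! hA
  obtain ⟨x, hx, y, hy, hxy⟩ := one_lt_card.1 hC
  obtain ⟨z, hz, hzxy⟩ := surjOn_of_injOn_of_card_le _
    (fun _ _ => mem_coe.2 (mem_univ _)) hU.injOn_f₂ (by rwa [card_univ]) (mem_univ (f₂ x.2.1 y.2.2))
  have hxz : x = z := hU.eq_of_f₂_eq hx hz (dH3_mk_thd_le_one y.2.2 x) hzxy.symm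
  have hyz : y = z := hU.eq_of_f₂_eq hy hz (dH3_mk_snd_le_one x.2.1 y) hzxy.symm
  exact hxy (hxz.trans hyz.symm)

end Unambiguous

def repetitionCode (s : A) : Finset (A × A × A) := (univ.erase s).image fun a => (a, a, a)

lemma mem_Omega_agreeOr {s a : A} {p : A × A} (hp : p ∈ Omega id (agreeOr s) (a, a, a)) :
    p.2 = a ∨ p = (a, s) := by
  obtain ⟨⟨u, v, w⟩, hd, rfl⟩ := mem_Omega.1 hp
  simp only [dH3, agreeOr, id] at hd ⊢
  split_ifs at hd ⊢ <;> simp_all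

lemma unambiguous_repetitionCode (s : A) : Unambiguous id (agreeOr s) (repetitionCode s) := by
  simp only [Unambiguous, repetitionCode, mem_image, mem_erase, mem_univ, and_true]
  rintro _ ⟨a, has, rfl⟩ _ ⟨b, hbs, rfl⟩ hab
  refine disjoint_left.2 fun p hpa hpb => ?_
  rcases mem_Omega_agreeOr hpa with ha | rfl <;> rcases mem_Omega_agreeOr hpb with hb | hb
  all_goals simp_all

lemma card_repetitionCode (s : A) : #(repetitionCode s) = Fintype.card A - 1 := by
  rw [repetitionCode, card_image_of_injective _ fun a b h => (Prod.mk.inj h).1,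
    card_erase_of_mem (mem_univ s), card_univ]

end

theorem stmt10 {A : Type*} [Fintype A] [DecidableEq A] (hA : 2 ≤ Fintype.card A) :
    (∃ (f₁ : A → A) (f₂ : A → A → A) (C : Finset (A × A × A)),
        Unambiguous f₁ f₂ C ∧ C.card = Fintype.card A - 1) ∧
    (∀ (f₁ : A → A) (f₂ : A → A → A) (C : Finset (A × A × A)),
        Unambiguous f₁ f₂ C → C.card ≤ Fintype.card A - 1) := by
  obtain ⟨s⟩ : Nonempty A := Fintype.card_pos_iff.1 (by omega)
  refine ⟨⟨id, agreeOr s, repetitionCode s, unambiguous_repetitionCode s,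
    card_repetitionCode s⟩, fun f₁ f₂ C hU => ?_⟩
  rcases le_or_gt #C 1 with hC | hC
  · omega
  · have := hU.card_lt hC
    omega
end

section
/- Let A be a finite alphabet with |A| ≥ 2 and fix * ∈ A. Define g : A × A → A by g(a,b) = a if a = b, and g(a,b) = * otherwise. For x ∈ A⁴, let Ω(x) = {(g(x₁',x₂'), g(x₃',x₄')) : x' ∈ A⁴ with dH(x', x) ≤ 1}. Then the repetition code C = {(a,a,a,a) : a ∈ A} satisfies Ω(x) ∩ Ω(y) = ∅ for all distinct x, y ∈ C. -/
/-!
A single corruption touches only one of the two pairs, so one vertex sees `(a, a)` and outputs `a`,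
while the other still sees at least one `a` and outputs `a` or `*`. Hence
`Ω(a,a,a,a) ⊆ {(a,a), (a,*), (*,a)}`, and these sets are disjoint for `a ≠ b`.
-/

open Finset

/-- Hamming distance on quadruples. -/
def dH4 {A : Type*} [DecidableEq A] (x y : A × A × A × A) : ℕ :=
  (if x.1 = y.1 then 0 else 1) + (if x.2.1 = y.2.1 then 0 else 1) +
    (if x.2.2.1 = y.2.2.1 then 0 else 1) + (if x.2.2.2 = y.2.2.2 then 0 else 1)

/-- Output sets at the terminal of the Mirrored Diamond Network with node function `g`. -/
def OmegaM {A : Type*} [Fintype A] [DecidableEq A] (g : A → A → A) (x : A × A × A × A) :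
    Finset (A × A) :=
  (Finset.univ.filter fun x' : A × A × A × A => dH4 x' x ≤ 1).image
    fun x' => (g x'.1 x'.2.1, g x'.2.2.1 x'.2.2.2)

lemma pair_eq_or_pair_eq_of_dH4_le_one {A : Type*} [DecidableEq A] {x y : A × A × A × A}
    (h : dH4 x y ≤ 1) :
    (x.1 = y.1 ∧ x.2.1 = y.2.1) ∨ (x.2.2.1 = y.2.2.1 ∧ x.2.2.2 = y.2.2.2) := by
  unfold dH4 at h
  split_ifs at h <;> simp_all

lemma eq_or_eq_of_dH4_le_one {A : Type*} [DecidableEq A] {x y : A × A × A × A}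
    (h : dH4 x y ≤ 1) :
    (x.1 = y.1 ∨ x.2.1 = y.2.1) ∧ (x.2.2.1 = y.2.2.1 ∨ x.2.2.2 = y.2.2.2) := by
  unfold dH4 at h
  split_ifs at h <;> simp_all

lemma ite_eq_or_eq_star {A : Type*} [DecidableEq A] {a u v : A} (star : A) (h : u = a ∨ v = a) :
    (if u = v then u else star) = a ∨ (if u = v then u else star) = star := by
  split_ifs with huv
  · subst huv
    exact .inl (or_self_iff.mp h)
  · exact .inr rfl

lemma OmegaM_rep_subset {A : Type*} [Fintype A] [DecidableEq A] (star a : A) :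
    OmegaM (fun u v => if u = v then u else star) (a, a, a, a) ⊆
      {(a, a), (a, star), (star, a)} := by
  intro p hp
  obtain ⟨⟨x₁, x₂, x₃, x₄⟩, hd, rfl⟩ := mem_image.mp hp
  replace hd := (mem_filter.mp hd).2
  obtain ⟨h₁₂, h₃₄⟩ : (x₁ = a ∨ x₂ = a) ∧ (x₃ = a ∨ x₄ = a) := eq_or_eq_of_dH4_le_one hd
  obtain ⟨h₁, h₂⟩ | ⟨h₃, h₄⟩ : (x₁ = a ∧ x₂ = a) ∨ (x₃ = a ∧ x₄ = a) :=
    pair_eq_or_pair_eq_of_dH4_le_one hd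
  · rcases ite_eq_or_eq_star star h₃₄ with h | h <;> simp [h₁, h₂, h]
  · rcases ite_eq_or_eq_star star h₁₂ with h | h <;> simp [h₃, h₄, h]

lemma disjoint_rep_outputs {A : Type*} [DecidableEq A] (star : A) {a b : A} (hab : a ≠ b) :
    Disjoint ({(a, a), (a, star), (star, a)} : Finset (A × A))
      {(b, b), (b, star), (star, b)} := by
  simp only [disjoint_insert_left, disjoint_insert_right, disjoint_singleton, ne_eq,
    Prod.mk.injEq, mem_insert, mem_singleton]
  grind

theorem stmt11_general {A : Type*} [Fintype A] [DecidableEq A]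
    (star : A) :
    ∀ a b : A, a ≠ b →
      Disjoint (OmegaM (fun u v => if u = v then u else star) (a, a, a, a))
        (OmegaM (fun u v => if u = v then u else star) (b, b, b, b)) := fun _ _ hab =>
  (disjoint_rep_outputs star hab).mono (OmegaM_rep_subset star _) (OmegaM_rep_subset star _)

theorem stmt11 {A : Type*} [Fintype A] [DecidableEq A] (hA : 2 ≤ Fintype.card A)
    (star : A) :
    ∀ a b : A, a ≠ b →
      Disjoint (OmegaM (fun u v => if u = v then u else star) (a, a, a, a))
        (OmegaM (fun u v => if u = v then u else star) (b, b, b, b)) :=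
  stmt11_general star
end

section
/- Let A be a finite alphabet, f₁ : A → A, f₂ : A × A → A, and suppose C ⊆ A³ is unambiguous for the Diamond Network with these functions and |C| ≥ 2. Then for every codeword x ∈ C except possibly one, the set {f₂(x₂',x₃') : dH((x₂',x₃'),(x₂,x₃)) ≤ 1} has cardinality at least 2, and consequently Σ_{x∈C} |Ω(x)| ≥ |C|² + |C| − 1. -/
/-!
Unambiguity forces the values `f₁ x₁` of distinct codewords to be distinct: otherwise the two
codewords could be steered to a common output by corrupting their second or third symbol. Hence,
inside `Ω(x)`, corrupting the first symbol yields `|C|` outputs in the row `f₂(x₂, x₃)`, while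
corrupting the second or third yields `|ω(x)|` outputs in the column `f₁ x₁`; the two families
share only `(f₁ x₁, f₂(x₂, x₃))`, so `|Ω(x)| ≥ |C| + |ω(x)| - 1`. If two codewords `x ≠ y` had
`|ω| = 1`, then `f₂(x₂, x₃) = f₂(x₂, y₃) = f₂(y₂, y₃)` and corrupting `x₁` to `y₁` would reach
the output of `y`. So `∑ |ω(x)| ≥ 2|C| - 1`, and summing the first bound gives the theorem.
-/

open Finset

/-- Hamming distance on pairs. -/
def dH2 {A : Type*} [DecidableEq A] (p q : A × A) : ℕ :=
  (if p.1 = q.1 then 0 else 1) + (if p.2 = q.2 then 0 else 1)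

/-- Possible symbols exiting the lower vertex V₂. -/
def omegaLow {A : Type*} [Fintype A] [DecidableEq A] (f₂ : A → A → A) (x : A × A × A) :
    Finset A :=
  (Finset.univ.filter fun p : A × A => dH2 p (x.2.1, x.2.2) ≤ 1).image fun p => f₂ p.1 p.2

lemma Finset.card_add_card_le_card_product_union_product {α β : Type*} [DecidableEq α]
    [DecidableEq β] (s : Finset α) (t : Finset β) (a : α) (b : β) :
    s.card + t.card ≤ (s ×ˢ {b} ∪ {a} ×ˢ t).card + 1 := by
  have hinter : (s ×ˢ {b} ∩ {a} ×ˢ t).card ≤ 1 := by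
    rw [product_inter_product, ← card_singleton (a, b), ← singleton_product_singleton]
    exact card_le_card (product_subset_product inter_subset_right inter_subset_left)
  have := card_union_add_card_inter (s ×ˢ {b}) ({a} ×ˢ t)
  simp only [card_product, card_singleton, mul_one, one_mul] at this
  omega

lemma Finset.two_mul_card_le_sum_add_one {ι : Type*} [DecidableEq ι] {s : Finset ι}
    {f : ι → ℕ} {x₀ : ι} (h₀ : 1 ≤ f x₀) (hx₀ : ∀ x ∈ s, x ≠ x₀ → 2 ≤ f x) :
    2 * s.card ≤ ∑ x ∈ s, f x + 1 := by
  calc 2 * s.card = ∑ _x ∈ s, 2 := by rw [sum_const, smul_eq_mul, mul_comm]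
    _ ≤ ∑ x ∈ s, (f x + if x₀ = x then 1 else 0) := by
        refine sum_le_sum fun x hx => ?_
        split_ifs with h
        · subst h; omega
        · exact hx₀ x hx (Ne.symm h)
    _ ≤ ∑ x ∈ s, f x + 1 := by
        rw [sum_add_distrib, sum_ite_eq]
        split_ifs <;> omega

section DiamondNetwork

variable {A : Type*} [Fintype A] [DecidableEq A] {f₁ : A → A} {f₂ : A → A → A}
  {C : Finset (A × A × A)} {x y : A × A × A}

lemma f₂_mem_omegaLow_left (b : A) : f₂ b x.2.2 ∈ omegaLow f₂ x :=
  mem_image.mpr ⟨(b, x.2.2), mem_filter.mpr ⟨mem_univ _, by simp only [dH2]; split_ifs <;> omega⟩,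
    rfl⟩

lemma f₂_mem_omegaLow_right (c : A) : f₂ x.2.1 c ∈ omegaLow f₂ x :=
  mem_image.mpr ⟨(x.2.1, c), mem_filter.mpr ⟨mem_univ _, by simp only [dH2]; split_ifs <;> omega⟩,
    rfl⟩

lemma card_omegaLow_pos : 0 < (omegaLow f₂ x).card :=
  card_pos.mpr ⟨_, f₂_mem_omegaLow_right x.2.2⟩

lemma mk_f₁_mem_Omega (a : A) : (f₁ a, f₂ x.2.1 x.2.2) ∈ Omega f₁ f₂ x :=
  mem_image.mpr ⟨(a, x.2.1, x.2.2),
    mem_filter.mpr ⟨mem_univ _, by simp only [dH3]; split_ifs <;> omega⟩, rfl⟩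

lemma mk_mem_Omega_of_mem_omegaLow {v : A} (hv : v ∈ omegaLow f₂ x) :
    (f₁ x.1, v) ∈ Omega f₁ f₂ x := by
  obtain ⟨p, hp, rfl⟩ := mem_image.mp hv
  have hp : dH2 p (x.2.1, x.2.2) ≤ 1 := (mem_filter.mp hp).2
  refine mem_image.mpr ⟨(x.1, p.1, p.2), mem_filter.mpr ⟨mem_univ _, ?_⟩, rfl⟩
  simp only [dH3, dH2] at hp ⊢
  split_ifs at hp ⊢ <;> omega

lemma product_union_product_subset_Omega (s : Finset (A × A × A)) :
    (s.image fun z => f₁ z.1) ×ˢ {f₂ x.2.1 x.2.2} ∪ {f₁ x.1} ×ˢ omegaLow f₂ x ⊆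
      Omega f₁ f₂ x := by
  rintro ⟨a, v⟩ hu
  simp only [mem_union, mem_product, mem_singleton] at hu
  rcases hu with ⟨ha, rfl⟩ | ⟨rfl, hv⟩
  · obtain ⟨z, -, rfl⟩ := mem_image.mp ha
    exact mk_f₁_mem_Omega _
  · exact mk_mem_Omega_of_mem_omegaLow hv

namespace Unambiguous

lemma injOn_f₁_fst (hC : Unambiguous f₁ f₂ C) : Set.InjOn (fun z : A × A × A => f₁ z.1) C := by
  intro x hx y hy hf
  by_contra hxy
  have hux : (f₁ x.1, f₂ x.2.1 y.2.2) ∈ Omega f₁ f₂ x :=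
    mk_mem_Omega_of_mem_omegaLow (f₂_mem_omegaLow_right _)
  have huy : (f₁ y.1, f₂ x.2.1 y.2.2) ∈ Omega f₁ f₂ y :=
    mk_mem_Omega_of_mem_omegaLow (f₂_mem_omegaLow_left _)
  exact disjoint_left.mp (hC x hx y hy hxy) hux (by simpa only [hf] using huy)

lemma eq_of_card_omegaLow_le_one (hC : Unambiguous f₁ f₂ C) (hx : x ∈ C) (hy : y ∈ C)
    (hx₁ : (omegaLow f₂ x).card ≤ 1) (hy₁ : (omegaLow f₂ y).card ≤ 1) : x = y := by
  by_contra hxy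
  have hfx : f₂ x.2.1 x.2.2 = f₂ x.2.1 y.2.2 :=
    card_le_one.mp hx₁ _ (f₂_mem_omegaLow_right _) _ (f₂_mem_omegaLow_right _)
  have hfy : f₂ y.2.1 y.2.2 = f₂ x.2.1 y.2.2 :=
    card_le_one.mp hy₁ _ (f₂_mem_omegaLow_right _) _ (f₂_mem_omegaLow_left _)
  have hux : (f₁ y.1, f₂ x.2.1 x.2.2) ∈ Omega f₁ f₂ x := mk_f₁_mem_Omega _
  have huy : (f₁ y.1, f₂ y.2.1 y.2.2) ∈ Omega f₁ f₂ y := mk_f₁_mem_Omega _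
  exact disjoint_left.mp (hC x hx y hy hxy) hux (by rwa [hfx, ← hfy])

lemma exists_forall_two_le_card_omegaLow (hC : Unambiguous f₁ f₂ C) (hne : C.Nonempty) :
    ∃ x₀ : A × A × A, ∀ x ∈ C, x ≠ x₀ → 2 ≤ (omegaLow f₂ x).card := by
  by_cases h : ∃ x₀ ∈ C, (omegaLow f₂ x₀).card ≤ 1
  · obtain ⟨x₀, hx₀, hx₀₁⟩ := h
    refine ⟨x₀, fun x hx hxx₀ => ?_⟩
    by_contra! hx₁
    exact hxx₀ (hC.eq_of_card_omegaLow_le_one hx hx₀ (by omega) hx₀₁)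
  · push Not at h
    exact ⟨hne.choose, fun x hx _ => h x hx⟩

lemma card_add_card_omegaLow_le (hC : Unambiguous f₁ f₂ C) :
    C.card + (omegaLow f₂ x).card ≤ (Omega f₁ f₂ x).card + 1 := by
  have hcard : (C.image fun z => f₁ z.1).card = C.card := card_image_of_injOn hC.injOn_f₁_fst
  calc C.card + (omegaLow f₂ x).card
      ≤ ((C.image fun z => f₁ z.1) ×ˢ {f₂ x.2.1 x.2.2} ∪ {f₁ x.1} ×ˢ omegaLow f₂ x).card + 1 :=
        hcard ▸ card_add_card_le_card_product_union_product _ _ _ _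
    _ ≤ (Omega f₁ f₂ x).card + 1 := by
        gcongr
        exact product_union_product_subset_Omega C

end Unambiguous

end DiamondNetwork

theorem stmt13 {A : Type*} [Fintype A] [DecidableEq A]
    (f₁ : A → A) (f₂ : A → A → A) (C : Finset (A × A × A))
    (hC : Unambiguous f₁ f₂ C) (hsize : 2 ≤ C.card) :
    (∃ x₀ : A × A × A, ∀ x ∈ C, x ≠ x₀ → 2 ≤ (omegaLow f₂ x).card) ∧
    C.card ^ 2 + C.card - 1 ≤ ∑ x ∈ C, (Omega f₁ f₂ x).card := by
  obtain ⟨x₀, hx₀⟩ := hC.exists_forall_two_le_card_omegaLow (card_pos.mp (by omega))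
  refine ⟨⟨x₀, hx₀⟩, ?_⟩
  have hlow : 2 * C.card ≤ ∑ x ∈ C, (omegaLow f₂ x).card + 1 :=
    two_mul_card_le_sum_add_one card_omegaLow_pos hx₀
  have hOmega : ∑ x ∈ C, (C.card + (omegaLow f₂ x).card) ≤ ∑ x ∈ C, ((Omega f₁ f₂ x).card + 1) :=
    sum_le_sum fun _ _ => hC.card_add_card_omegaLow_le
  simp only [sum_add_distrib, sum_const, smul_eq_mul, mul_one] at hOmega
  rw [sq]
  omega
end
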